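/- For every integer m ≥ 7, V(F_m) = 2V(F_{m-1}) + 3V(F_{m-2}) − 4V(F_{m-3}) − 2V(F_{m-4}) + 2V(F_{m-5}) + 1 − 2⌊m/2⌋. -/

import Mathlib

/-
Below `F (k + 1)` only `F 2, …, F k` can occur in a representation, and these add up to
`F (k + 2) - 2`. Splitting on whether `F (k + 1)` is used, and complementing inside
`{F 2, …, F k}`, gives `R (F (k + 1) + i) = R i + R (F k - 2 - i)` for `i ≤ F k - 2`: on
`[F (k + 1), F (k + 2) - 2]`, `R` is its initial segment up to `F k - 2` plus the reversal.
Summing squares and products over such blocks, with `U k = V (F k - 2)` and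
`W k = ∑_{i + j = F k - 2} R i * R j`, gives `U (k + 2) = U (k + 1) + 2 U k + 2 W k + 1` and
`W (k + 3) = 2 W (k + 1) + 2 W k + 2 U (k + 1) + 2 U k + 2`. Eliminating `W` leaves
`U (k + 5) + 2 U (k + 1) = U (k + 4) + 4 U (k + 3) + 1`, and `V (F k) = U k + 1 + ⌊k / 2⌋²`
because `R (F k - 1) = 1` and `R (F k) = ⌊k / 2⌋`. The cases `m = 7, 8` are computed directly.
-/

/-- Number of representations of `n` as a sum of distinct Fibonacci numbers. -/
noncomputable def R (n : ℕ) : ℕ :=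
  Nat.card {s : Finset ℕ // (∀ x ∈ s, 0 < x ∧ ∃ m, Nat.fib m = x) ∧ ∑ x ∈ s, x = n}

noncomputable def A (H : ℕ) : ℕ := ∑ n ∈ Finset.range (H + 1), R n

noncomputable def V (H : ℕ) : ℕ := ∑ n ∈ Finset.range (H + 1), (R n) ^ 2

open Finset

def subsetSumCount (S : Finset ℕ) (n : ℕ) : ℕ := #{t ∈ S.powerset | ∑ x ∈ t, x = n}

namespace subsetSumCount

variable {S : Finset ℕ}

theorem insert_add {a : ℕ} (ha : a ∉ S) (j : ℕ) :
    subsetSumCount (insert a S) (a + j) = subsetSumCount S (a + j) + subsetSumCount S j := by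
  simp only [subsetSumCount, card_filter, sum_powerset_insert ha]
  congr 1
  refine sum_congr rfl fun t ht => ?_
  simp only [sum_insert (notMem_mono (mem_powerset.1 ht) ha), Nat.add_left_cancel_iff]

theorem eq_of_add_eq_sum {a b : ℕ} (hab : a + b = ∑ x ∈ S, x) :
    subsetSumCount S a = subsetSumCount S b := by
  have hsum {t : Finset ℕ} (ht : t ⊆ S) : ∑ x ∈ S \ t, x + ∑ x ∈ t, x = ∑ x ∈ S, x :=
    sum_sdiff ht
  refine card_nbij' (S \ ·) (S \ ·) ?_ ?_ ?_ ?_ <;> intro t ht <;>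
    simp only [coe_filter, mem_powerset, Set.mem_ofPred_eq] at ht ⊢
  iterate 2 exact ⟨sdiff_subset, by have := hsum ht.1; omega⟩
  iterate 2 exact Finset.sdiff_sdiff_eq_self ht.1

theorem eq_zero {n : ℕ} (hn : ∑ x ∈ S, x < n) : subsetSumCount S n = 0 := by
  rw [subsetSumCount, card_eq_zero, filter_eq_empty_iff]
  intro t ht
  have := sum_le_sum_of_subset (f := fun x => x) (mem_powerset.1 ht)
  omega

end subsetSumCount

theorem sum_range_sq_add_reflect {M : Type*} [CommSemiring M] (f : ℕ → M) (c : ℕ) :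
    ∑ i ∈ range (c + 1), (f i + f (c - i)) ^ 2 =
      2 * ∑ i ∈ range (c + 1), f i ^ 2 + 2 * ∑ i ∈ range (c + 1), f i * f (c - i) := by
  have hreflect : ∑ i ∈ range (c + 1), f (c - i) ^ 2 = ∑ i ∈ range (c + 1), f i ^ 2 := by
    simpa using sum_range_reflect (fun i => f i ^ 2) (c + 1)
  simp only [add_sq, sum_add_distrib, hreflect, mul_assoc, ← mul_sum]
  ring

def fibs (k : ℕ) : Finset ℕ := (Icc 2 k).image Nat.fib

theorem mem_fibs {k x : ℕ} : x ∈ fibs k ↔ (0 < x ∧ ∃ m, Nat.fib m = x) ∧ x < Nat.fib (k + 1) := by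
  simp only [fibs, mem_image, mem_Icc]
  constructor
  · rintro ⟨i, ⟨hi2, hik⟩, rfl⟩
    exact ⟨⟨Nat.fib_pos.2 (by omega), i, rfl⟩, (Nat.fib_lt_fib hi2).2 (by omega)⟩
  · rintro ⟨⟨hx, m, rfl⟩, hlt⟩
    obtain ⟨i, hi2, hfib⟩ : ∃ i, 2 ≤ i ∧ Nat.fib i = Nat.fib m := by
      rcases Nat.lt_or_ge m 2 with hm | hm
      · interval_cases m
        exacts [absurd hx (by simp), ⟨2, le_rfl, rfl⟩]
      · exact ⟨m, hm, rfl⟩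
    rw [← hfib] at hlt ⊢
    exact ⟨i, ⟨hi2, by have := (Nat.fib_lt_fib hi2).1 hlt; omega⟩, rfl⟩

theorem fib_succ_notMem_fibs (k : ℕ) : Nat.fib (k + 1) ∉ fibs k := fun h =>
  (mem_fibs.1 h).2.false

theorem fibs_succ {k : ℕ} (hk : 1 ≤ k) : fibs (k + 1) = insert (Nat.fib (k + 1)) (fibs k) := by
  rw [fibs, fibs, ← image_insert, insert_Icc_right_eq_Icc_add_one (by omega)]

theorem sum_fibs {k : ℕ} (hk : 1 ≤ k) : ∑ x ∈ fibs k, x + 2 = Nat.fib (k + 2) := by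
  induction k, hk using Nat.le_induction with
  | base => rfl
  | succ k hk ih =>
    rw [fibs_succ hk, sum_insert (fib_succ_notMem_fibs k), add_assoc, ih]
    exact Nat.fib_add_two.symm

theorem R_eq_subsetSumCount {k n : ℕ} (hn : n < Nat.fib (k + 1)) :
    R n = subsetSumCount (fibs k) n := by
  refine Nat.subtype_card _ fun s => ?_
  simp only [mem_filter, mem_powerset]
  constructor
  · rintro ⟨hs, rfl⟩
    exact ⟨fun x hx => (mem_fibs.1 (hs hx)).1, rfl⟩
  · rintro ⟨hs, rfl⟩
    refine ⟨fun x hx => mem_fibs.2 ⟨hs x hx, ?_⟩, rfl⟩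
    exact lt_of_le_of_lt (single_le_sum (f := id) (fun _ _ => Nat.zero_le _) hx) hn

theorem two_le_fib {k : ℕ} (hk : 3 ≤ k) : 2 ≤ Nat.fib k := Nat.fib_mono hk

theorem R_zero : R 0 = 1 := by
  rw [R_eq_subsetSumCount (k := 0) Nat.one_pos]
  rfl

theorem R_fib_succ_add {k a i : ℕ} (ha : Nat.fib k = a + 2) (hi : i ≤ a) :
    R (Nat.fib (k + 1) + i) = R i + R (a - i) := by
  have hk : 1 ≤ k := Nat.pos_of_ne_zero fun h => by simp [h] at ha
  have hsum := sum_fibs hk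
  have hfib : Nat.fib (k + 2) = Nat.fib k + Nat.fib (k + 1) := Nat.fib_add_two
  have hmono : Nat.fib k ≤ Nat.fib (k + 1) := Nat.fib_le_fib_succ
  rw [R_eq_subsetSumCount (k := k + 1) (by omega : _ < Nat.fib (k + 2)), fibs_succ hk,
    subsetSumCount.insert_add (fib_succ_notMem_fibs k),
    subsetSumCount.eq_of_add_eq_sum (b := a - i) (by omega),
    ← R_eq_subsetSumCount (by omega), ← R_eq_subsetSumCount (by omega), add_comm]

theorem R_fib_add_two_sub_one {k : ℕ} (hk : 1 ≤ k) : R (Nat.fib (k + 2) - 1) = R (Nat.fib k - 1) := by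
  have hsum := sum_fibs hk
  have hfib : Nat.fib (k + 2) = Nat.fib k + Nat.fib (k + 1) := Nat.fib_add_two
  have hpos : 0 < Nat.fib k := Nat.fib_pos.2 hk
  have hmono : Nat.fib k ≤ Nat.fib (k + 1) := Nat.fib_le_fib_succ
  rw [show Nat.fib (k + 2) - 1 = Nat.fib (k + 1) + (Nat.fib k - 1) by omega,
    R_eq_subsetSumCount (k := k + 1) (by omega : _ < Nat.fib (k + 2)), fibs_succ hk,
    subsetSumCount.insert_add (fib_succ_notMem_fibs k), subsetSumCount.eq_zero (by omega),
    zero_add, ← R_eq_subsetSumCount (by omega)]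

theorem R_fib_sub_one : ∀ k, 1 ≤ k → R (Nat.fib k - 1) = 1
  | 1, _ | 2, _ => R_zero
  | k + 3, _ => by
    rw [R_fib_add_two_sub_one (by omega)]
    exact R_fib_sub_one (k + 1) (by omega)

theorem R_fib_sub_two : ∀ k, 3 ≤ k → R (Nat.fib k - 2) = (k - 1) / 2
  | 3, _ => R_zero
  | 4, _ => R_fib_sub_one 3 (by omega)
  | k + 5, _ => by
    have ha := two_le_fib (k := k + 3) (by omega)
    have hfib : Nat.fib (k + 5) = Nat.fib (k + 3) + Nat.fib (k + 4) := Nat.fib_add_two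
    rw [show Nat.fib (k + 5) - 2 = Nat.fib (k + 4) + (Nat.fib (k + 3) - 2) by omega,
      R_fib_succ_add (by omega) le_rfl, Nat.sub_self, R_zero, R_fib_sub_two (k + 3) (by omega)]
    omega

theorem R_fib {k : ℕ} (hk : 4 ≤ k) : R (Nat.fib k) = k / 2 := by
  obtain ⟨j, rfl⟩ : ∃ j, k = j + 1 := ⟨k - 1, by omega⟩
  have ha := two_le_fib (k := j) (by omega)
  rw [← add_zero (Nat.fib (j + 1)), R_fib_succ_add (a := Nat.fib j - 2) (by omega) (Nat.zero_le _),
    R_zero, Nat.sub_zero, R_fib_sub_two j (by omega)]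
  omega

noncomputable def selfConv (c : ℕ) : ℕ := ∑ j ∈ range (c + 1), R j * R (c - j)

theorem R_fib_succ_add_reflect {k a i : ℕ} (ha : Nat.fib k = a + 2) (hi : i ≤ a) :
    R (Nat.fib (k + 1) + (a - i)) = R (Nat.fib (k + 1) + i) := by
  rw [R_fib_succ_add ha (Nat.sub_le a i), R_fib_succ_add ha hi, Nat.sub_sub_self hi, add_comm]

theorem sum_sq_R_fib_succ_add {k a : ℕ} (ha : Nat.fib k = a + 2) :
    ∑ i ∈ range (a + 1), R (Nat.fib (k + 1) + i) ^ 2 = 2 * V a + 2 * selfConv a := by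
  rw [sum_congr rfl fun i hi => by rw [R_fib_succ_add ha (Nat.lt_succ_iff.1 (mem_range.1 hi))]]
  exact sum_range_sq_add_reflect R a

theorem V_succ (n : ℕ) : V (n + 1) = V n + R (n + 1) ^ 2 := sum_range_succ _ _

theorem V_add (N c : ℕ) : V (N + c + 1) = V N + ∑ i ∈ range (c + 1), R (N + 1 + i) ^ 2 := by
  rw [V, V, show N + c + 1 + 1 = N + 1 + (c + 1) by ring, sum_range_add]

theorem V_fib_sub_one {k : ℕ} (hk : 3 ≤ k) : V (Nat.fib k - 1) = V (Nat.fib k - 2) + 1 := by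
  have := two_le_fib hk
  rw [show Nat.fib k - 1 = Nat.fib k - 2 + 1 by omega, V_succ,
    show Nat.fib k - 2 + 1 = Nat.fib k - 1 by omega, R_fib_sub_one k (by omega), one_pow]

theorem V_fib {k : ℕ} (hk : 4 ≤ k) : V (Nat.fib k) = V (Nat.fib k - 2) + 1 + (k / 2) ^ 2 := by
  have := two_le_fib (k := k) (by omega)
  rw [show Nat.fib k = Nat.fib k - 1 + 1 by omega, V_succ, V_fib_sub_one (by omega),
    Nat.sub_add_cancel (by omega), R_fib hk]

theorem V_fib_add_two_sub_two {k : ℕ} (hk : 3 ≤ k) :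
    V (Nat.fib (k + 2) - 2) =
      V (Nat.fib (k + 1) - 2) + 1 + 2 * V (Nat.fib k - 2) + 2 * selfConv (Nat.fib k - 2) := by
  have ha := two_le_fib hk
  have hb := two_le_fib (k := k + 1) (by omega)
  have hfib : Nat.fib (k + 2) = Nat.fib k + Nat.fib (k + 1) := Nat.fib_add_two
  rw [show Nat.fib (k + 2) - 2 = Nat.fib (k + 1) - 1 + (Nat.fib k - 2) + 1 by omega, V_add,
    Nat.sub_add_cancel (by omega), V_fib_sub_one (by omega), sum_sq_R_fib_succ_add (by omega)]
  ring

theorem selfConv_fib_add_three_sub_two {k : ℕ} (hk : 3 ≤ k) :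
    selfConv (Nat.fib (k + 3) - 2) =
      2 * selfConv (Nat.fib (k + 1) - 2) + 2 * selfConv (Nat.fib k - 2)
        + 2 * V (Nat.fib (k + 1) - 2) + 2 * V (Nat.fib k - 2) + 2 := by
  obtain ⟨a, ha⟩ : ∃ a, Nat.fib (k + 1) = a + 2 :=
    ⟨_, (Nat.sub_add_cancel (two_le_fib (by omega))).symm⟩
  obtain ⟨g, hg⟩ : ∃ g, Nat.fib k = g + 2 := ⟨_, (Nat.sub_add_cancel (two_le_fib hk)).symm⟩
  have hb : Nat.fib (k + 2) = a + g + 4 := by rw [Nat.fib_add_two, ha, hg]; ring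
  have hc : Nat.fib (k + 3) = 2 * a + g + 6 := by rw [Nat.fib_add_two, ha, hb]; ring
  set c := 2 * a + g + 4
  set T := fun j => R j * R (c - j) with hT
  rw [hc, ha, hg, show 2 * a + g + 6 - 2 = c by omega, Nat.add_sub_cancel, Nat.add_sub_cancel]
  have hsplit : selfConv c = ∑ j ∈ range (a + 1), T j + ∑ t ∈ range (g + 3), T (a + 1 + t)
      + ∑ i ∈ range (a + 1), T (a + 1 + (g + 3) + i) := by
    rw [selfConv, show c + 1 = a + 1 + (g + 3) + (a + 1) by omega, sum_range_add, sum_range_add]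
  have hlow : ∑ j ∈ range (a + 1), T j = selfConv a + V a := by
    rw [selfConv, V, ← sum_add_distrib]
    refine sum_congr rfl fun j hj => ?_
    have hja : j ≤ a := Nat.lt_succ_iff.1 (mem_range.1 hj)
    simp only [hT]
    rw [show c - j = Nat.fib (k + 1 + 1) + (a - j) by rw [hb]; omega,
      R_fib_succ_add ha (Nat.sub_le a j), Nat.sub_sub_self hja]
    ring
  have hhigh : ∑ i ∈ range (a + 1), T (a + 1 + (g + 3) + i) = ∑ j ∈ range (a + 1), T j := by
    -- `j ↦ c - j` maps the last block onto the first one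
    rw [← sum_range_reflect]
    refine sum_congr rfl fun i hi => ?_
    have hia : i ≤ a := Nat.lt_succ_iff.1 (mem_range.1 hi)
    simp only [hT]
    rw [show a + 1 + (g + 3) + (a + 1 - 1 - i) = c - i by omega,
      show c - (c - i) = i by omega, mul_comm]
  have hmid : ∑ t ∈ range (g + 3), T (a + 1 + t) = 2 * V g + 2 * selfConv g + 2 := by
    have h1 : R (a + 1) = 1 := by simpa [ha] using R_fib_sub_one (k + 1) (by omega)
    have h2 : R (a + g + 3) = 1 := by simpa [hb] using R_fib_sub_one (k + 2) (by omega)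
    have hinner : ∑ s ∈ range (g + 1), T (a + 1 + (s + 1)) = 2 * V g + 2 * selfConv g := by
      rw [← sum_sq_R_fib_succ_add hg]
      refine sum_congr rfl fun s hs => ?_
      have hsg : s ≤ g := Nat.lt_succ_iff.1 (mem_range.1 hs)
      simp only [hT]
      rw [show c - (a + 1 + (s + 1)) = Nat.fib (k + 1) + (g - s) by omega,
        R_fib_succ_add_reflect hg hsg, show a + 1 + (s + 1) = Nat.fib (k + 1) + s by omega, sq]
    rw [sum_range_succ _ (g + 2), sum_range_succ', hinner]
    simp only [hT]
    rw [show c - (a + 1 + 0) = a + g + 3 by omega, show a + 1 + (g + 2) = a + g + 3 by omega,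
      show c - (a + g + 3) = a + 1 by omega, add_zero, h1, h2]
  rw [hsplit, hhigh, hlow, hmid]
  ring

theorem V_fib_sub_two_recurrence {k : ℕ} (hk : 3 ≤ k) :
    V (Nat.fib (k + 5) - 2) + 2 * V (Nat.fib (k + 1) - 2) =
      V (Nat.fib (k + 4) - 2) + 4 * V (Nat.fib (k + 3) - 2) + 1 := by
  have h5 : V (Nat.fib (k + 5) - 2) = V (Nat.fib (k + 4) - 2) + 1 + 2 * V (Nat.fib (k + 3) - 2)
      + 2 * selfConv (Nat.fib (k + 3) - 2) := V_fib_add_two_sub_two (by omega)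
  have h3 : V (Nat.fib (k + 3) - 2) = V (Nat.fib (k + 2) - 2) + 1 + 2 * V (Nat.fib (k + 1) - 2)
      + 2 * selfConv (Nat.fib (k + 1) - 2) := V_fib_add_two_sub_two (by omega)
  have h2 := V_fib_add_two_sub_two hk
  have hconv := selfConv_fib_add_three_sub_two hk
  omega

theorem half_sq_identity (n : ℕ) :
    ((n + 5) / 2) ^ 2 + 4 * ((n + 2) / 2) ^ 2 + 2 * ((n + 1) / 2) ^ 2 + 2 * ((n + 5) / 2) =
      2 * ((n + 4) / 2) ^ 2 + 3 * ((n + 3) / 2) ^ 2 + 2 * (n / 2) ^ 2 + 1 := by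
  rcases Nat.even_or_odd' n with ⟨t, rfl | rfl⟩ <;>
    simp only [add_assoc, Nat.mul_add_div two_pos, Nat.mul_div_cancel_left t two_pos] <;> ring

theorem V_eq_sum_subsetSumCount {k H : ℕ} (hH : H < Nat.fib (k + 1)) :
    V H = ∑ n ∈ range (H + 1), subsetSumCount (fibs k) n ^ 2 :=
  sum_congr rfl fun n hn => by
    rw [R_eq_subsetSumCount (lt_of_le_of_lt (Nat.lt_succ_iff.1 (mem_range.1 hn)) hH)]

theorem V_small : V 1 = 2 ∧ V 2 = 3 ∧ V 3 = 7 ∧ V 5 = 12 ∧ V 8 = 26 ∧ V 13 = 53 ∧ V 21 = 121 := by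
  refine ⟨?_, ?_, ?_, ?_, ?_, ?_, ?_⟩ <;> rw [V_eq_sum_subsetSumCount (k := 8) (by decide)] <;> decide

theorem V_fib_recurrence (m : ℕ) (hm : 7 ≤ m) :
    (V (Nat.fib m) : ℤ) =
      2 * V (Nat.fib (m - 1)) + 3 * V (Nat.fib (m - 2)) - 4 * V (Nat.fib (m - 3))
        - 2 * V (Nat.fib (m - 4)) + 2 * V (Nat.fib (m - 5)) + 1 - 2 * (m / 2 : ℕ) := by
  rcases Nat.lt_or_ge m 9 with hm9 | hm9
  · obtain ⟨hV1, hV2, hV3, hV5, hV8, hV13, hV21⟩ := V_small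
    interval_cases m <;> norm_num [hV1, hV2, hV3, hV5, hV8, hV13, hV21]
  obtain ⟨n, rfl⟩ : ∃ n, m = n + 9 := ⟨m - 9, by omega⟩
  simp only [Nat.reduceSubDiff]
  have hrec₁ := V_fib_sub_two_recurrence (k := n + 4) (by omega)
  have hrec₂ := V_fib_sub_two_recurrence (k := n + 3) (by omega)
  have hhalf := half_sq_identity (n + 4)
  simp only [add_assoc, Nat.reduceAdd] at hrec₁ hrec₂ hhalf
  rw [V_fib (k := n + 9) (by omega), V_fib (k := n + 8) (by omega), V_fib (k := n + 7) (by omega),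
    V_fib (k := n + 6) (by omega), V_fib (k := n + 5) (by omega), V_fib (k := n + 4) (by omega)]
  omega
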